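/- arXiv:2403.10985 — 2 statements merged into one kernel-verified Lean document; each statement's English description precedes it below -/
import Mathlib

section
/- Let G be a finite simple graph with |V(G)| ≥ 2 and Shannon capacity Θ(G) > 1. Then the reversible capacity satisfies log Θ_REV(G) ≥ (log|V(G)| · log Θ(G)) / (log|V(G)| + log Θ(G)); equivalently Θ_REV(G) ≥ Θ(G)^{log|V(G)| / (log|V(G)| + log Θ(G))}. -/
open Filter

/-- A language `L` over the vertices of `G` is distinguishable if any two distinct
equal-length words differ at some position by two non-adjacent, non-equal symbols. -/
def Distinguishable {V : Type*} (G : SimpleGraph V) (L : Set (List V)) : Prop :=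
  ∀ x ∈ L, ∀ y ∈ L, x.length = y.length → x ≠ y →
    ∃ (i : ℕ) (hx : i < x.length) (hy : i < y.length),
      x.get ⟨i, hx⟩ ≠ y.get ⟨i, hy⟩ ∧ ¬ G.Adj (x.get ⟨i, hx⟩) (y.get ⟨i, hy⟩)

/-- The growth rate of a language: `limsup |L(n)|^(1/n)`. -/
noncomputable def growthRate {V : Type*} (L : Set (List V)) : ℝ :=
  Filter.limsup (fun n : ℕ =>
    ((Set.ncard {w ∈ L | w.length = n} : ℕ) : ℝ) ^ (1 / (n : ℝ))) Filter.atTop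

/-- The `n`-fold strong graph product of `G` with itself. -/
def strongPow {V : Type*} (G : SimpleGraph V) (n : ℕ) : SimpleGraph (Fin n → V) where
  Adj x y := x ≠ y ∧ ∀ i, x i = y i ∨ G.Adj (x i) (y i)
  symm := by
    constructor
    rintro x y ⟨hne, h⟩
    exact ⟨hne.symm, fun i => (h i).imp Eq.symm (fun h' => h'.symm)⟩
  loopless := by constructor; rintro x ⟨hne, _⟩; exact hne rfl

/-- The independence number of a graph. -/
noncomputable def indepNum {V : Type*} (G : SimpleGraph V) : ℕ :=
  sSup {k | ∃ s : Set V, (s.Pairwise fun a b => ¬ G.Adj a b) ∧ s.ncard = k}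

/-- The Shannon (zero-error) capacity `Θ(G) = sup_n α(G^{⊠n})^{1/n}`. -/
noncomputable def shannonCapacity {V : Type*} (G : SimpleGraph V) : ℝ :=
  ⨆ n : ℕ, ((indepNum (strongPow G (n + 1)) : ℝ)) ^ (1 / ((n : ℝ) + 1))

/-- A reversible partial DFA: each symbol's partial transition function is injective
on its domain. -/
structure RevPartialDFA (α : Type*) where
  /-- the (finite) state space -/
  σ : Type
  /-- the state space is finite -/
  fintype : Fintype σ
  /-- partial transition function -/
  step : σ → α → Option σ
  /-- initial state -/
  start : σ
  /-- accepting states -/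
  accept : Set σ
  /-- reversibility: transitions by a fixed symbol are injective where defined -/
  reversible : ∀ (a : α) (x y q : σ), step x a = some q → step y a = some q → x = y

/-- The partial evaluation of a reversible partial DFA on a word (`none` if any
transition along the word is undefined). -/
def RevPartialDFA.eval {α : Type*} (M : RevPartialDFA α) (w : List α) : Option M.σ :=
  w.foldl (fun os a => os.bind fun s => M.step s a) (some M.start)

/-- The language accepted by a reversible partial DFA: all transitions defined and the
final state accepting. -/
def RevPartialDFA.accepts {α : Type*} (M : RevPartialDFA α) : Set (List α) :=
  {w | ∃ s ∈ M.accept, M.eval w = some s}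

/-- The reversible capacity `Θ_REV(G)`: the supremum of growth rates over reversible
partial DFAs whose accepted language is distinguishable for `G`. -/
noncomputable def revCapacity {V : Type*} (G : SimpleGraph V) : ℝ :=
  sSup {r : ℝ |
    ∃ M : RevPartialDFA V, Distinguishable G M.accepts ∧ growthRate M.accepts = r}

/-!
Let `F` be a distinguishable set of `N` words of length `K` (an independent set of `G^⊠K`,
so `N^{1/K}` is close to `Θ(G)`), and let `c` encode `F` injectively by words of length `M`,
which is possible once `N ≤ q^M`, `q = |V|`. The automaton reads concatenations of blocks
`c w ++ w`: it follows the codeword in a trie, which determines `w`, and then reads `w` while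
remembering the suffix still to come. A trie state has a unique parent, a suffix `u` reached by
the letter `a` comes from `a :: u`, and the word `w` reached at the end of a codeword cannot come
from `a :: w`, which is longer than any word of `F`; so the automaton is reversible. Two different blocks differ at a
distinguishing position of their `F`-parts, so its language is distinguishable, and it contains
`N^t` words of length `(M + K) t`; hence `Θ_REV ≥ N^{1/(M+K)}`. Applying this to `F^j` with
`M = ⌈j log N / log q⌉` and letting `j → ∞` gives `log Θ_REV ≥ log N / (K + log N / log q)`,
and letting `N^{1/K} → Θ` gives the bound.
-/

open Computability

section

variable {V : Type*}

def Distinguished (G : SimpleGraph V) (x y : List V) : Prop :=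
  ∃ (i : ℕ) (hx : i < x.length) (hy : i < y.length), x[i] ≠ y[i] ∧ ¬ G.Adj x[i] y[i]

section Distinguished

variable {G : SimpleGraph V}

theorem distinguishable_iff {L : Set (List V)} :
    Distinguishable G L ↔
      ∀ x ∈ L, ∀ y ∈ L, x.length = y.length → x ≠ y → Distinguished G x y :=
  Iff.rfl

theorem Distinguished.append_right {x y : List V} (h : Distinguished G x y) (x' y' : List V) :
    Distinguished G (x ++ x') (y ++ y') := by
  obtain ⟨i, hx, hy, hne, hadj⟩ := h
  refine ⟨i, by simp; omega, by simp; omega, ?_⟩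
  rw [List.getElem_append_left hx, List.getElem_append_left hy]
  exact ⟨hne, hadj⟩

theorem Distinguished.append_left {x y : List V} (h : Distinguished G x y) {x' y' : List V}
    (hlen : x'.length = y'.length) : Distinguished G (x' ++ x) (y' ++ y) := by
  obtain ⟨i, hx, hy, h⟩ := h
  refine ⟨x'.length + i, by simp; omega, by simp; omega, ?_⟩
  simpa [List.getElem_append_right, hlen] using h

theorem Distinguishable.mono {L L' : Set (List V)} (h : Distinguishable G L) (hsub : L' ⊆ L) :
    Distinguishable G L' :=
  fun x hx y hy => h x (hsub hx) y (hsub hy)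

theorem Distinguishable.kstar {B : Language V} {n : ℕ} (hB : Distinguishable G B)
    (hlen : ∀ w ∈ B, w.length = n) : Distinguishable G (B∗ : Language V) := by
  suffices key : ∀ Ls₁ Ls₂ : List (List V), (∀ b ∈ Ls₁, b ∈ B) → (∀ b ∈ Ls₂, b ∈ B) →
      Ls₁.flatten.length = Ls₂.flatten.length → Ls₁.flatten ≠ Ls₂.flatten →
      Distinguished G Ls₁.flatten Ls₂.flatten by
    rintro _ ⟨Ls₁, rfl, h₁⟩ _ ⟨Ls₂, rfl, h₂⟩
    exact key Ls₁ Ls₂ h₁ h₂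
  intro Ls₁
  induction Ls₁ with
  | nil =>
    intro Ls₂ _ _ hlen' hne
    exact absurd (List.eq_nil_of_length_eq_zero hlen'.symm).symm hne
  | cons b₁ T₁ ih =>
    rintro (_ | ⟨b₂, T₂⟩) h₁ h₂ hlen' hne
    · exact absurd (List.eq_nil_of_length_eq_zero hlen') hne
    simp only [List.mem_cons, forall_eq_or_imp] at h₁ h₂
    have hb : b₁.length = b₂.length := by rw [hlen _ h₁.1, hlen _ h₂.1]
    simp only [List.flatten_cons, List.length_append, hb, Nat.add_left_cancel_iff] at hlen' hne ⊢
    by_cases heq : b₁ = b₂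
    · subst heq
      exact (ih T₂ h₁.2 h₂.2 hlen' fun h => hne (by rw [h])).append_left rfl
    · exact (distinguishable_iff.mp hB _ h₁.1 _ h₂.1 hb heq).append_right _ _

end Distinguished

theorem Set.ncard_image2_append {A C : Set (List V)} {n : ℕ} (hA : ∀ w ∈ A, w.length = n) :
    (Set.image2 (· ++ ·) A C).ncard = A.ncard * C.ncard := by
  have hinj : Set.InjOn (fun p : List V × List V => p.1 ++ p.2) (A ×ˢ C) := by
    rintro ⟨a, c⟩ ⟨ha, -⟩ ⟨a', c'⟩ ⟨ha', -⟩ h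
    obtain ⟨rfl, rfl⟩ := List.append_inj h (by rw [hA a ha, hA a' ha'])
    rfl
  rw [← Set.image_prod, hinj.ncard_image, Set.ncard_prod]

namespace Language

variable {B : Language V} {n : ℕ}

theorem length_of_mem_pow (hB : ∀ w ∈ B, w.length = n) {t : ℕ} {w : List V}
    (hw : w ∈ B ^ t) : w.length = n * t := by
  induction t generalizing w with
  | zero => rw [(mem_one w).mp hw]; rfl
  | succ t ih =>
    obtain ⟨a, ha, b, hb, rfl⟩ := mem_mul.mp (pow_succ' B t ▸ hw)
    rw [List.length_append, hB a ha, ih hb]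
    ring

theorem ncard_pow (hB : ∀ w ∈ B, w.length = n) (t : ℕ) :
    Set.ncard (B ^ t : Language V) = Set.ncard B ^ t := by
  induction t with
  | zero => simp [one_def]
  | succ t ih =>
    rw [pow_succ', mul_def, pow_succ', ← ih]
    exact Set.ncard_image2_append hB

end Language

section GrowthRate

variable [Fintype V]

theorem ncard_length_eq (n : ℕ) : {w : List V | w.length = n}.ncard = Fintype.card V ^ n := by
  rw [← Nat.card_coe_set_eq, ← card_vector n, ← Nat.card_eq_fintype_card]
  rfl

variable [Nonempty V]

theorem rpow_ncard_length_eq_le_card (L : Set (List V)) (n : ℕ) :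
    ((Set.ncard {w ∈ L | w.length = n} : ℕ) : ℝ) ^ (1 / (n : ℝ)) ≤ Fintype.card V := by
  rcases Nat.eq_zero_or_pos n with rfl | hn
  · simp [Nat.one_le_iff_ne_zero]
  have hcount : Set.ncard {w ∈ L | w.length = n} ≤ Fintype.card V ^ n := by
    calc Set.ncard {w ∈ L | w.length = n} ≤ Set.ncard {w : List V | w.length = n} :=
          Set.ncard_le_ncard (fun w hw => hw.2) (List.finite_length_eq V n)
      _ = Fintype.card V ^ n := ncard_length_eq n
  calc ((Set.ncard {w ∈ L | w.length = n} : ℕ) : ℝ) ^ (1 / (n : ℝ))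
      ≤ ((Fintype.card V : ℝ) ^ n) ^ (1 / (n : ℝ)) := by gcongr; exact_mod_cast hcount
    _ = Fintype.card V := by rw [one_div, Real.pow_rpow_inv_natCast (by positivity) hn.ne']

theorem growthRate_le_card (L : Set (List V)) : growthRate L ≤ Fintype.card V :=
  limsup_le_of_le (isBoundedUnder_of ⟨0, fun _ => by positivity⟩).isCoboundedUnder_le
    (.of_forall (rpow_ncard_length_eq_le_card L))

theorem growthRate_le_revCapacity {G : SimpleGraph V} {M : RevPartialDFA V}
    (hM : Distinguishable G M.accepts) : growthRate M.accepts ≤ revCapacity G :=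
  le_csSup ⟨Fintype.card V, by rintro _ ⟨M, -, rfl⟩; exact growthRate_le_card _⟩ ⟨M, hM, rfl⟩

theorem rpow_le_growthRate {L : Set (List V)} {b : ℝ} (hb : 0 ≤ b) {d : ℕ} (hd : 0 < d)
    (h : ∀ t, b ^ t ≤ Set.ncard {w ∈ L | w.length = d * t}) :
    b ^ (1 / (d : ℝ)) ≤ growthRate L := by
  refine le_limsup_of_frequently_le (frequently_atTop.mpr fun a => ⟨d * (a + 1), ?_, ?_⟩)
    (isBoundedUnder_of ⟨_, rpow_ncard_length_eq_le_card L⟩)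
  · nlinarith
  · calc b ^ (1 / (d : ℝ)) = (b ^ (a + 1)) ^ (1 / ((d * (a + 1) : ℕ) : ℝ)) := by
          rw [← Real.rpow_natCast, ← Real.rpow_mul hb]
          congr 1
          push_cast
          field_simp
      _ ≤ _ := by gcongr; exact h (a + 1)

end GrowthRate

namespace RevPartialDFA

variable {α : Type*}

theorem eval_eq_foldlM (M : RevPartialDFA α) (w : List α) :
    M.eval w = w.foldlM M.step M.start := by
  suffices h : ∀ o : Option M.σ,
      w.foldl (fun os a => os.bind fun s => M.step s a) o = o.bind (w.foldlM M.step) from h _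
  induction w with
  | nil => intro o; cases o <;> rfl
  | cons a w ih => intro o; rw [List.foldl_cons, ih]; cases o <;> simp

theorem exists_accepts_eq {σ : Type*} (step : σ → α → Option σ) (start : σ) (accept : Set σ)
    {S : Set σ} (hS : S.Finite) (hstart : start ∈ S)
    (hmaps : ∀ s ∈ S, ∀ a t, step s a = some t → t ∈ S)
    (hinj : ∀ a, ∀ s ∈ S, ∀ s' ∈ S, ∀ t, step s a = some t → step s' a = some t → s = s') :
    ∃ M : RevPartialDFA α, M.accepts = {w | ∃ s ∈ accept, w.foldlM step start = some s} := by
  have := hS.to_subtype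
  -- the state type of a `RevPartialDFA` lives in `Type`, so `S` is replaced by `Fin (Nat.card S)`
  let e := Finite.equivFin S
  let φ : Fin (Nat.card S) → σ := fun x => e.symm x
  have hφ : φ.Injective := Subtype.val_injective.comp e.symm.injective
  let step' (x : Fin (Nat.card S)) (a : α) : Option (Fin (Nat.card S)) :=
    (step (φ x) a).pmap (fun t ht => e ⟨t, ht⟩) fun t ht => hmaps _ (e.symm x).2 a t ht
  have hstep' (x a) : (step' x a).map φ = step (φ x) a := by
    rw [Option.map_pmap]
    simp_rw [φ, Equiv.symm_apply_apply]
    exact (Option.pmap_eq_map _ id _ _).trans Option.map_id'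
  have hrun (w : List α) (x) : (w.foldlM step' x).map φ = w.foldlM step (φ x) := by
    induction w generalizing x with
    | nil => rfl
    | cons a w ih =>
      simp only [List.foldlM_cons, Option.bind_eq_bind, Option.map_bind, ← hstep' x a,
        Option.bind_map]
      congr 1
      funext y
      exact ih y
  refine ⟨⟨Fin (Nat.card S), inferInstance, step', e ⟨start, hstart⟩, φ ⁻¹' accept,
    fun a x y q hx hy => hφ (by
      obtain ⟨t, _, hxt, hxq⟩ := Option.pmap_eq_some_iff.mp hx
      obtain ⟨t', _, hyt, hyq⟩ := Option.pmap_eq_some_iff.mp hy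
      have htt : t' = t := congrArg Subtype.val (e.injective (hyq.symm.trans hxq))
      exact hinj a _ (e.symm x).2 _ (e.symm y).2 t hxt (htt ▸ hyt))⟩, ?_⟩
  ext w
  have hw := hrun w (e ⟨start, hstart⟩)
  simp only [φ, Equiv.symm_apply_apply] at hw
  constructor
  · rintro ⟨s, hs, h⟩
    exact ⟨φ s, hs, hw.symm.trans (congrArg (Option.map φ) ((eval_eq_foldlM _ w).symm.trans h))⟩
  · rintro ⟨s, hs, h⟩
    obtain ⟨s', hs', rfl⟩ := Option.map_eq_some_iff.mp (hw.trans h)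
    exact ⟨s', hs, (eval_eq_foldlM _ w).trans hs'⟩

end RevPartialDFA

namespace BlockCode

variable (P : Set (List V)) (c : List V → List V) (K M : ℕ)

open Classical in
/-- `inl p`: the prefix `p` of a codeword has been read; `inr u`: a codeword `c w` has been read
and `u` is the part of `w` still to be read. The start and only accepting state is `inl []`. -/
noncomputable def step : List V ⊕ List V → V → Option (List V ⊕ List V)
  | .inl p, a =>
    if p ++ [a] ∈ c '' P then some (.inr (Function.invFunOn c P (p ++ [a])))
    else if (p ++ [a]).length < M then some (.inl (p ++ [a])) else none
  | .inr [], _ => none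
  | .inr (b :: u), a => if b = a then some (if u = [] then .inl [] else .inr u) else none

def unstep : List V ⊕ List V → V → List V ⊕ List V
  | .inl q, a => if q = [] then .inr [a] else .inl q.dropLast
  | .inr u, a => if u.length = K then .inl (c u).dropLast else .inr (a :: u)

def states : Set (List V ⊕ List V) :=
  .inl '' {p | p.length < M} ∪ .inr '' {u | u.length ≤ K}

def blocks : Language V := (fun w => c w ++ w) '' P

def completions : List V ⊕ List V → Language V
  | .inl p => {z | p ++ z ∈ (blocks P c)∗}
  | .inr u => {z | ∃ z' ∈ (blocks P c)∗, z = u ++ z'}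

variable {P c K M}

theorem step_eq_some {s t : List V ⊕ List V} {a : V} (h : step P c M s a = some t) :
    (∃ p w, s = .inl p ∧ w ∈ P ∧ c w = p ++ [a] ∧ t = .inr w) ∨
    (∃ p, s = .inl p ∧ (p ++ [a]).length < M ∧ t = .inl (p ++ [a])) ∨
    (s = .inr [a] ∧ t = .inl []) ∨
    (∃ u, u ≠ [] ∧ s = .inr (a :: u) ∧ t = .inr u) := by
  rcases s with p | _ | ⟨b, u⟩
  · simp only [step] at h
    split_ifs at h with hcode hlen <;> cases h
    · exact .inl ⟨p, _, rfl, Function.invFunOn_mem hcode, Function.invFunOn_eq hcode, rfl⟩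
    · exact .inr (.inl ⟨p, rfl, hlen, rfl⟩)
  · cases h
  · simp only [step] at h
    split_ifs at h with hb hu <;> cases h <;> subst hb
    · exact .inr (.inr (.inl ⟨by rw [hu], rfl⟩))
    · exact .inr (.inr (.inr ⟨u, hu, rfl, rfl⟩))

theorem eq_unstep_of_step_eq_some (hP : ∀ w ∈ P, w.length = K) {s t : List V ⊕ List V} {a : V}
    (hs : s ∈ states K M) (h : step P c M s a = some t) : s = unstep c K t a := by
  rcases step_eq_some h with ⟨p, w, rfl, hw, hcw, rfl⟩ | ⟨p, rfl, -, rfl⟩ | ⟨rfl, rfl⟩ |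
    ⟨u, -, rfl, rfl⟩
  · simp [unstep, hP w hw, hcw]
  · simp [unstep]
  · simp [unstep]
  · have : u.length + 1 ≤ K := by simpa [states] using hs
    simp [unstep, show u.length ≠ K by omega]

theorem step_mem_states (hP : ∀ w ∈ P, w.length = K) (hM : 0 < M)
    {s t : List V ⊕ List V} {a : V} (hs : s ∈ states K M) (h : step P c M s a = some t) :
    t ∈ states K M := by
  rcases step_eq_some h with ⟨p, w, rfl, hw, -, rfl⟩ | ⟨p, rfl, hp, rfl⟩ | ⟨rfl, rfl⟩ |
    ⟨u, -, rfl, rfl⟩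
  · simp [states, hP w hw]
  · simpa [states] using hp
  · simpa [states] using hM
  · have : u.length + 1 ≤ K := by simpa [states] using hs
    simp only [states, Set.mem_union, Set.mem_image, Sum.inr.injEq, exists_eq_right]
    right; show u.length ≤ K; omega

theorem mem_completions_of_foldlM_eq {s : List V ⊕ List V} {z : List V}
    (h : z.foldlM (step P c M) s = some (.inl [])) : z ∈ completions P c s := by
  induction z generalizing s with
  | nil =>
    obtain rfl : s = .inl [] := Option.some_inj.mp h
    exact Language.nil_mem_kstar _
  | cons a z ih =>
    obtain ⟨t, hst, hz⟩ := Option.bind_eq_some_iff.mp h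
    have hz := ih hz
    rcases step_eq_some hst with ⟨p, w, rfl, hw, hcw, rfl⟩ | ⟨p, rfl, -, rfl⟩ | ⟨rfl, rfl⟩ |
      ⟨u, -, rfl, rfl⟩
    · obtain ⟨z', hz', rfl⟩ := hz
      have : (c w ++ w) ++ z' ∈ (blocks P c)∗ :=
        mul_kstar_le_kstar (a := blocks P c) (Language.append_mem_mul ⟨w, hw, rfl⟩ hz')
      rw [hcw, List.append_assoc, List.append_assoc, List.singleton_append] at this
      exact this
    · have hz : (p ++ [a]) ++ z ∈ (blocks P c)∗ := hz
      show p ++ a :: z ∈ (blocks P c)∗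
      simpa using hz
    · exact ⟨z, hz, rfl⟩
    · obtain ⟨z', hz', rfl⟩ := hz
      exact ⟨z', hz', rfl⟩

theorem foldlM_codeword (hc : Set.InjOn c P) (hcM : ∀ w ∈ P, (c w).length = M) {w : List V}
    (hw : w ∈ P) {p r : List V} (hr : r ≠ []) (hpr : p ++ r = c w) :
    r.foldlM (step P c M) (.inl p) = some (.inr w) := by
  induction r generalizing p with
  | nil => exact absurd rfl hr
  | cons a r ih =>
    rw [List.foldlM_cons]
    by_cases hr' : r = []
    · subst hr'
      have hdec : Function.invFunOn c P (p ++ [a]) = w := hpr ▸ hc.leftInvOn_invFunOn hw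
      simp [step, hpr ▸ Set.mem_image_of_mem c hw, hdec]
    · have hlen : (p ++ [a]).length < M := by
        rw [← hcM w hw, ← hpr]
        simpa using List.length_pos_iff.mpr hr'
      have hnot : p ++ [a] ∉ c '' P := by
        rintro ⟨w', hw', h'⟩
        exact hlen.ne (h' ▸ hcM w' hw')
      simp only [step, hnot, hlen, if_false, if_true, Option.bind_eq_bind, Option.bind_some]
      exact ih hr' (by simpa using hpr)

theorem foldlM_word {u : List V} (hu : u ≠ []) :
    u.foldlM (step P c M) (.inr u) = some (.inl []) := by
  induction u with
  | nil => exact absurd rfl hu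
  | cons b u ih =>
    by_cases hu' : u = []
    · subst hu'; simp [step]
    · simpa [step, hu'] using ih hu'

theorem foldlM_eq_inl_nil_iff (hP : ∀ w ∈ P, w.length = K) (hK : 0 < K) (hc : Set.InjOn c P)
    (hcM : ∀ w ∈ P, (c w).length = M) (hM : 0 < M) {z : List V} :
    z.foldlM (step P c M) (.inl []) = some (.inl []) ↔ z ∈ (blocks P c)∗ := by
  refine ⟨mem_completions_of_foldlM_eq, ?_⟩
  rintro ⟨L, rfl, hL⟩
  induction L with
  | nil => rfl
  | cons b L ih =>
    obtain ⟨w, hw, rfl⟩ := hL b List.mem_cons_self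
    have hcw : c w ≠ [] := List.ne_nil_of_length_pos (hcM w hw ▸ hM)
    have hw' : w ≠ [] := List.ne_nil_of_length_pos (hP w hw ▸ hK)
    simp only [List.flatten_cons, List.append_assoc, List.foldlM_append, Option.bind_eq_bind,
      foldlM_codeword hc hcM hw hcw (List.nil_append _), foldlM_word hw', Option.bind_some]
    exact ih fun y hy => hL y (List.mem_cons_of_mem _ hy)

theorem exists_revPartialDFA_accepts_eq [Finite V] (hP : ∀ w ∈ P, w.length = K) (hK : 0 < K)
    (hc : Set.InjOn c P) (hcM : ∀ w ∈ P, (c w).length = M) (hM : 0 < M) :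
    ∃ A : RevPartialDFA V, A.accepts = (blocks P c)∗ := by
  obtain ⟨A, hA⟩ := RevPartialDFA.exists_accepts_eq (step P c M) (.inl []) {.inl []}
    (S := states K M)
    (((List.finite_length_lt V M).image _).union ((List.finite_length_le V K).image _))
    (by simpa [states] using hM) (fun _ hs _ _ h => step_mem_states hP hM hs h)
    fun _ _ hs _ hs' _ h h' =>
      (eq_unstep_of_step_eq_some hP hs h).trans (eq_unstep_of_step_eq_some hP hs' h').symm
  refine ⟨A, hA.trans ?_⟩
  ext z
  simp only [Set.mem_ofPred_eq, Set.mem_singleton_iff, exists_eq_left,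
    foldlM_eq_inl_nil_iff hP hK hc hcM hM]
  exact Iff.rfl

theorem distinguishable_blocks {G : SimpleGraph V} (hG : Distinguishable G P)
    (hP : ∀ w ∈ P, w.length = K) (hcM : ∀ w ∈ P, (c w).length = M) :
    Distinguishable G (blocks P c) := by
  rintro _ ⟨w, hw, rfl⟩ _ ⟨w', hw', rfl⟩ - hne
  have hww' : w ≠ w' := by rintro rfl; exact hne rfl
  exact (distinguishable_iff.mp hG w hw w' hw' (by rw [hP w hw, hP w' hw']) hww').append_left
    (by rw [hcM w hw, hcM w' hw'])

theorem length_of_mem_blocks (hP : ∀ w ∈ P, w.length = K) (hcM : ∀ w ∈ P, (c w).length = M)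
    {z : List V} (hz : z ∈ blocks P c) : z.length = M + K := by
  obtain ⟨w, hw, rfl⟩ := hz
  simp [hP w hw, hcM w hw]

theorem ncard_blocks (hcM : ∀ w ∈ P, (c w).length = M) : Set.ncard (blocks P c) = P.ncard :=
  Set.InjOn.ncard_image fun w hw w' hw' h =>
    (List.append_inj h (by rw [hcM w hw, hcM w' hw'])).2

end BlockCode

theorem exists_isIndepSet_ncard_eq_indepNum {W : Type*} [Finite W] (H : SimpleGraph W) :
    ∃ s : Set W, H.IsIndepSet s ∧ s.ncard = indepNum H :=
  Nat.sSup_mem (s := {k | ∃ s : Set W, (s.Pairwise fun a b => ¬ H.Adj a b) ∧ s.ncard = k})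
    ⟨0, ∅, Set.pairwise_empty _, Set.ncard_empty W⟩
    ⟨Nat.card W, by rintro _ ⟨s, -, rfl⟩; exact Set.ncard_le_card s⟩

theorem distinguishable_image_ofFn {G : SimpleGraph V} {n : ℕ} {s : Set (Fin n → V)}
    (hs : (strongPow G n).IsIndepSet s) :
    Distinguishable G (List.ofFn '' s) := by
  rintro _ ⟨u, hu, rfl⟩ _ ⟨v, hv, rfl⟩ - hne
  have huv : u ≠ v := by rintro rfl; exact hne rfl
  have hnadj := hs hu hv huv
  simp only [strongPow, huv, ne_eq, not_false_eq_true, true_and, not_forall, not_or] at hnadj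
  obtain ⟨i, hi⟩ := hnadj
  exact ⟨i, by simp, by simp, by simpa using hi⟩

theorem exists_distinguishable_of_lt_shannonCapacity [Fintype V] {G : SimpleGraph V} {θ : ℝ}
    (hθ0 : 0 ≤ θ) (hθ : θ < shannonCapacity G) :
    ∃ K > 0, ∃ F : Set (List V),
      Distinguishable G F ∧ (∀ w ∈ F, w.length = K) ∧ θ ^ K < F.ncard := by
  obtain ⟨n, hn⟩ := exists_lt_of_lt_ciSup hθ
  obtain ⟨s, hs, hcard⟩ := exists_isIndepSet_ncard_eq_indepNum (strongPow G (n + 1))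
  refine ⟨n + 1, n.succ_pos, List.ofFn '' s, distinguishable_image_ofFn hs, ?_, ?_⟩
  · rintro _ ⟨u, -, rfl⟩
    exact List.length_ofFn
  · rw [Set.ncard_image_of_injective s List.ofFn_injective, hcard]
    calc θ ^ (n + 1) < ((indepNum (strongPow G (n + 1)) : ℝ) ^ (1 / ((n : ℝ) + 1))) ^ (n + 1) :=
          pow_lt_pow_left₀ hn hθ0 n.succ_ne_zero
      _ = indepNum (strongPow G (n + 1)) := by
          rw [one_div, ← Nat.cast_succ, Real.rpow_inv_natCast_pow (Nat.cast_nonneg _)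
            n.succ_ne_zero]

section Capacity

variable [Fintype V] [Nonempty V] {G : SimpleGraph V}

theorem rpow_ncard_le_revCapacity {P : Set (List V)} {K M : ℕ}
    (hG : Distinguishable G P) (hP : ∀ w ∈ P, w.length = K) (hK : 0 < K) (hM : 0 < M)
    (hPM : P.ncard ≤ Fintype.card V ^ M) :
    (P.ncard : ℝ) ^ (1 / ((M + K : ℕ) : ℝ)) ≤ revCapacity G := by
  have hPfin : P.Finite := (List.finite_length_eq V K).subset hP
  obtain ⟨c, hcM, hc⟩ := hPfin.exists_injOn_of_encard_le (t := {u : List V | u.length = M}) (by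
    rw [← hPfin.cast_ncard_eq, ← (List.finite_length_eq V M).cast_ncard_eq, ncard_length_eq]
    exact_mod_cast hPM)
  obtain ⟨A, hA⟩ := BlockCode.exists_revPartialDFA_accepts_eq hP hK hc hcM hM
  have hlen := fun z => BlockCode.length_of_mem_blocks (z := z) hP hcM
  refine (rpow_le_growthRate (Nat.cast_nonneg _) (by omega) fun t => ?_).trans
    (growthRate_le_revCapacity (hA ▸ (BlockCode.distinguishable_blocks hG hP hcM).kstar hlen))
  have hsub : Set.ncard (BlockCode.blocks P c ^ t) ≤
      Set.ncard {w ∈ A.accepts | w.length = (M + K) * t} :=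
    Set.ncard_le_ncard
      (fun z hz => ⟨hA ▸ pow_le_kstar (a := BlockCode.blocks P c) hz,
        Language.length_of_mem_pow hlen hz⟩)
      ((List.finite_length_eq V _).subset fun z hz => hz.2)
  rw [← BlockCode.ncard_blocks hcM]
  exact_mod_cast (Language.ncard_pow hlen t).symm.le.trans hsub

theorem one_le_revCapacity : 1 ≤ revCapacity G := by
  obtain ⟨v⟩ := ‹Nonempty V›
  simpa using rpow_ncard_le_revCapacity (G := G) (P := {[v]}) (K := 1) (M := 1)
    (fun x hx y hy _ hne => absurd (hx.trans hy.symm) hne) (by simp) one_pos one_pos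
    (by simp [Nat.one_le_iff_ne_zero])

theorem div_add_one_div_le_log_revCapacity (hq : 1 < Fintype.card V) {F : Language V} {K : ℕ}
    (hF : Distinguishable G F) (hlen : ∀ w ∈ F, w.length = K) (hK : 0 < K)
    (hN : 1 < F.ncard) {j : ℕ} (hj : 0 < j) :
    Real.log F.ncard / (K + Real.log F.ncard / Real.log (Fintype.card V) + 1 / j) ≤
      Real.log (revCapacity G) := by
  set L := Real.log F.ncard
  set lq := Real.log (Fintype.card V)
  have hL : 0 < L := Real.log_pos (by exact_mod_cast hN)
  have hlq : 0 < lq := Real.log_pos (by exact_mod_cast hq)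
  have hjR : (0 : ℝ) < j := by exact_mod_cast hj
  -- the least code length `M` with `N ^ j ≤ q ^ M`
  set M := ⌈j * L / lq⌉₊
  have hM : 0 < M := Nat.ceil_pos.mpr (by positivity)
  have hMle : (M : ℝ) < j * L / lq + 1 := Nat.ceil_lt_add_one (by positivity)
  have hFj : Distinguishable G (F ^ j) := (hF.kstar hlen).mono (pow_le_kstar (a := F))
  have hNM : (F ^ j).ncard ≤ Fintype.card V ^ M := by
    rw [Language.ncard_pow hlen]
    have : Real.log ((F.ncard : ℝ) ^ j) ≤ Real.log ((Fintype.card V : ℝ) ^ M) := by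
      rw [Real.log_pow, Real.log_pow, ← div_le_iff₀ hlq]
      exact Nat.le_ceil _
    exact_mod_cast (Real.log_le_log_iff (by positivity) (by positivity)).mp this
  have hrate := rpow_ncard_le_revCapacity hFj (fun w => Language.length_of_mem_pow hlen)
    (Nat.mul_pos hK hj) hM hNM
  rw [Language.ncard_pow hlen] at hrate
  have hlog := Real.log_le_log (by positivity) hrate
  rw [Real.log_rpow (by positivity), Nat.cast_pow, Real.log_pow] at hlog
  calc L / (K + L / lq + 1 / j) = j * L / (K * j + j * L / lq + 1) := by
        field_simp
    _ ≤ j * L / ((M + K * j : ℕ) : ℝ) := by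
        gcongr
        push_cast
        linarith
    _ ≤ Real.log (revCapacity G) := by
        rw [div_eq_mul_one_div, mul_comm]
        exact hlog

theorem div_add_div_le_log_revCapacity (hq : 1 < Fintype.card V) {F : Language V} {K : ℕ}
    (hF : Distinguishable G F) (hlen : ∀ w ∈ F, w.length = K) (hK : 0 < K)
    (hN : 1 < F.ncard) :
    Real.log F.ncard / (K + Real.log F.ncard / Real.log (Fintype.card V)) ≤
      Real.log (revCapacity G) := by
  have hL : 0 < Real.log F.ncard := Real.log_pos (by exact_mod_cast hN)
  have hlq : 0 < Real.log (Fintype.card V) := Real.log_pos (by exact_mod_cast hq)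
  refine le_of_tendsto ?_ (eventually_atTop.mpr ⟨1, fun j hj =>
    div_add_one_div_le_log_revCapacity hq hF hlen hK hN hj⟩)
  have hden := tendsto_one_div_atTop_nhds_zero_nat.const_add
    ((K : ℝ) + Real.log F.ncard / Real.log (Fintype.card V))
  rw [add_zero] at hden
  exact tendsto_const_nhds.div hden (by positivity)

theorem mul_log_div_le_log_revCapacity (hq : 1 < Fintype.card V) {θ : ℝ} (hθ1 : 1 < θ)
    (hθ : θ < shannonCapacity G) :
    Real.log (Fintype.card V) * Real.log θ / (Real.log (Fintype.card V) + Real.log θ) ≤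
      Real.log (revCapacity G) := by
  obtain ⟨K, hK, F, hF, hlen, hN⟩ := exists_distinguishable_of_lt_shannonCapacity (by linarith) hθ
  set L := Real.log F.ncard
  set lq := Real.log (Fintype.card V)
  have hlq : 0 < lq := Real.log_pos (by exact_mod_cast hq)
  have hlθ : 0 < Real.log θ := Real.log_pos hθ1
  have hθK : 1 < θ ^ K := one_lt_pow₀ hθ1 hK.ne'
  have hKL : K * Real.log θ < L := by
    rw [← Real.log_pow]
    exact Real.log_lt_log (by linarith) hN
  refine le_trans ?_ (div_add_div_le_log_revCapacity hq hF hlen hK (by exact_mod_cast hθK.trans hN))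
  have hsplit : lq * Real.log θ * (K + L / lq) = lq * (K * Real.log θ) + Real.log θ * L := by
    field_simp
  rw [div_le_div_iff₀ (by positivity) (by positivity), hsplit]
  nlinarith [mul_lt_mul_of_pos_left hKL hlq]

end Capacity

end

/-- lower bound for the reversible capacity in terms of the Shannon
capacity: `log Θ_REV ≥ log|G| log Θ / (log|G| + log Θ)`, equivalently
`Θ_REV ≥ Θ^{log|G|/(log|G| + log Θ)}`. -/
theorem revCapacity_lower_bound {V : Type*} [Fintype V] (G : SimpleGraph V)
    (hcard : 2 ≤ Fintype.card V) (hΘ : 1 < shannonCapacity G) :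
    Real.log (revCapacity G) ≥
      Real.log (Fintype.card V) * Real.log (shannonCapacity G) /
        (Real.log (Fintype.card V) + Real.log (shannonCapacity G)) ∧
    revCapacity G ≥
      shannonCapacity G ^
        (Real.log (Fintype.card V) /
          (Real.log (Fintype.card V) + Real.log (shannonCapacity G))) := by
  have : Nonempty V := Fintype.card_pos_iff.mp (by omega)
  have hΘ0 : 0 < shannonCapacity G := one_pos.trans hΘ
  have hcont : ContinuousAt (fun θ => Real.log (Fintype.card V) * Real.log θ /
      (Real.log (Fintype.card V) + Real.log θ)) (shannonCapacity G) := by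
    have hlq : 0 < Real.log (Fintype.card V) := Real.log_pos (by exact_mod_cast hcard)
    have hlΘ : 0 < Real.log (shannonCapacity G) := Real.log_pos hΘ
    exact (continuousAt_const.mul (Real.continuousAt_log hΘ0.ne')).div
      (continuousAt_const.add (Real.continuousAt_log hΘ0.ne')) (by positivity)
  have hlog := le_of_tendsto (hcont.tendsto.mono_left nhdsWithin_le_nhds)
    (eventually_of_mem (Ioo_mem_nhdsLT hΘ) fun θ hθ =>
      mul_log_div_le_log_revCapacity (by omega) hθ.1 hθ.2)
  refine ⟨hlog, ?_⟩
  rw [ge_iff_le, ← Real.log_le_log_iff (by positivity) (one_pos.trans_le one_le_revCapacity),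
    Real.log_rpow hΘ0, div_mul_eq_mul_div]
  exact hlog
end

section
/- For every finite simple graph G, the unitary capacity is at most the Shannon capacity: Θ_U(G) ≤ Θ(G). -/
open Filter

/-- A Kondacs–Watrous quantum finite automaton over alphabet `α`. -/
structure KWQFA (α : Type*) where
  /-- dimension of the Hilbert space -/
  d : ℕ
  /-- unitary transition matrix for each symbol -/
  U : α → Matrix (Fin d) (Fin d) ℂ
  unitary : ∀ a, U a ∈ Matrix.unitaryGroup (Fin d) ℂ
  /-- initial state -/
  init : Fin d → ℂ
  init_norm : ∑ i, Complex.normSq (init i) = 1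
  /-- accepting projection -/
  A : Matrix (Fin d) (Fin d) ℂ
  /-- rejecting projection -/
  R : Matrix (Fin d) (Fin d) ℂ
  A_idem : A * A = A
  A_herm : A.IsHermitian
  R_idem : R * R = R
  R_herm : R.IsHermitian
  AR : A * R = 0

namespace KWQFA

variable {α : Type*} (M : KWQFA α)

/-- The nonhalting projection `N = I − A − R`. -/
noncomputable def N : Matrix (Fin M.d) (Fin M.d) ℂ := 1 - M.A - M.R

/-- The accepting component of the state after reading a word:
`A (U_{s_n} N) ⋯ (U_{s_1} N) |init⟩` (first symbol applied first). -/
noncomputable def acceptVec (w : List α) : Fin M.d → ℂ :=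
  M.A.mulVec (w.foldl (fun v a => (M.U a * M.N).mulVec v) M.init)

/-- The set of strings accepted with nonzero probability. -/
def accepts : Set (List α) := {w | M.acceptVec w ≠ 0}

/-- The capacity of the automaton: growth of total acceptance probability, counting
strings weighted by their acceptance probability. -/
noncomputable def capacity [Fintype α] : ℝ :=
  Filter.limsup (fun n : ℕ =>
    (∑ w : Fin n → α, ∑ i, Complex.normSq (M.acceptVec (List.ofFn w) i)) ^ (1 / (n : ℝ)))
    Filter.atTop

end KWQFA

/-- The unitary capacity `Θ_U(G)`: the supremum of the capacities of Kondacs–Watrous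
quantum finite automata whose accepted language is distinguishable for `G`. -/
noncomputable def unitaryCapacity {V : Type*} [Fintype V] (G : SimpleGraph V) : ℝ :=
  sSup {r : ℝ | ∃ M : KWQFA V, Distinguishable G M.accepts ∧ M.capacity = r}

/-!
Reading a symbol applies `U_a N`, a unitary times an orthogonal projection, hence a contraction
of `ℂ^d`; so every word is accepted with probability at most `1`, and the total weight of the
words of length `n` is at most the number of accepted ones. By distinguishability these form an
independent set of `G^{⊠n}`, so the weight is at most `α(G^{⊠n}) ≤ Θ(G)^n`.
-/

open scoped Matrix Matrix.Norms.L2Operator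

section Contraction

variable {𝕜 n ι : Type*} [RCLike 𝕜] [Fintype n] [DecidableEq n]

theorem Matrix.norm_toLp_mulVec_le_of_norm_le_one {T : Matrix n n 𝕜} (hT : ‖T‖ ≤ 1)
    (v : n → 𝕜) : ‖WithLp.toLp 2 (T *ᵥ v)‖ ≤ ‖WithLp.toLp 2 v‖ :=
  calc ‖WithLp.toLp 2 (T *ᵥ v)‖ ≤ ‖T‖ * ‖WithLp.toLp 2 v‖ := T.l2_opNorm_mulVec _
    _ ≤ ‖WithLp.toLp 2 v‖ := mul_le_of_le_one_left (norm_nonneg _) hT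

theorem List.norm_toLp_foldl_mulVec_le {T : ι → Matrix n n 𝕜} (hT : ∀ a, ‖T a‖ ≤ 1)
    (w : List ι) (v : n → 𝕜) :
    ‖WithLp.toLp 2 (w.foldl (fun v a => T a *ᵥ v) v)‖ ≤ ‖WithLp.toLp 2 v‖ := by
  induction w generalizing v with
  | nil => rfl
  | cons a w ih => exact (ih _).trans (Matrix.norm_toLp_mulVec_le_of_norm_le_one (hT a) v)

end Contraction

theorem sum_normSq_eq_norm_toLp_sq {n : Type*} [Fintype n] (v : n → ℂ) :
    ∑ i, Complex.normSq (v i) = ‖WithLp.toLp 2 v‖ ^ 2 := by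
  simp [EuclideanSpace.norm_sq_eq, Complex.normSq_eq_norm_sq]

namespace KWQFA

variable {α : Type*} (M : KWQFA α)

theorem isStarProjection_A : IsStarProjection M.A := ⟨M.A_idem, M.A_herm⟩

theorem isStarProjection_R : IsStarProjection M.R := ⟨M.R_idem, M.R_herm⟩

theorem isStarProjection_N : IsStarProjection M.N := by
  rw [N, sub_sub]
  exact (M.isStarProjection_A.add M.isStarProjection_R M.AR).one_sub

theorem norm_U_mul_N_le_one (a : α) : ‖M.U a * M.N‖ ≤ 1 := by
  rw [CStarRing.norm_mem_unitary_mul _ (M.unitary a)]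
  exact M.isStarProjection_N.norm_le

noncomputable def acceptProb (w : List α) : ℝ := ∑ i, Complex.normSq (M.acceptVec w i)

theorem acceptProb_nonneg (w : List α) : 0 ≤ M.acceptProb w :=
  Finset.sum_nonneg fun _ _ => Complex.normSq_nonneg _

theorem acceptProb_le_one (w : List α) : M.acceptProb w ≤ 1 := by
  have hnorm : ‖WithLp.toLp 2 (M.acceptVec w)‖ ≤ ‖WithLp.toLp 2 M.init‖ :=
    calc ‖WithLp.toLp 2 (M.acceptVec w)‖
        ≤ ‖WithLp.toLp 2 (w.foldl (fun v a => (M.U a * M.N) *ᵥ v) M.init)‖ :=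
          Matrix.norm_toLp_mulVec_le_of_norm_le_one M.isStarProjection_A.norm_le _
      _ ≤ ‖WithLp.toLp 2 M.init‖ := w.norm_toLp_foldl_mulVec_le M.norm_U_mul_N_le_one M.init
  rw [acceptProb, sum_normSq_eq_norm_toLp_sq, ← M.init_norm, sum_normSq_eq_norm_toLp_sq]
  exact pow_le_pow_left₀ (norm_nonneg _) hnorm 2

theorem mem_accepts_of_acceptProb_ne_zero {w : List α} (h : M.acceptProb w ≠ 0) :
    w ∈ M.accepts :=
  fun h0 => h (by simp [acceptProb, h0])

end KWQFA

theorem ncard_le_indepNum {W : Type*} [Finite W] {H : SimpleGraph W} {s : Set W}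
    (hs : s.Pairwise fun a b => ¬ H.Adj a b) : s.ncard ≤ indepNum H :=
  le_csSup ⟨Nat.card W, by rintro _ ⟨t, -, rfl⟩; exact t.ncard_le_card⟩ ⟨s, hs, rfl⟩

theorem indepNum_le_card {W : Type*} [Fintype W] (H : SimpleGraph W) :
    indepNum H ≤ Fintype.card W :=
  csSup_le' <| by
    rintro _ ⟨s, -, rfl⟩
    exact Nat.card_eq_fintype_card (α := W) ▸ s.ncard_le_card

theorem Distinguishable.pairwise_not_adj_strongPow {V : Type*} {G : SimpleGraph V}
    {L : Set (List V)} (hL : Distinguishable G L) (n : ℕ) :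
    {w : Fin n → V | List.ofFn w ∈ L}.Pairwise fun x y => ¬ (strongPow G n).Adj x y := by
  intro x hx y hy hxy hadj
  obtain ⟨i, hix, _, hne, hnadj⟩ :=
    hL _ hx _ hy (by simp) fun h => hxy (List.ofFn_injective h)
  have hi : i < n := by simpa using hix
  simp only [List.get_eq_getElem, List.getElem_ofFn] at hne hnadj
  exact (hadj.2 ⟨i, hi⟩).elim hne hnadj

section ShannonCapacity

variable {V : Type*} [Fintype V] (G : SimpleGraph V)

theorem indepNum_strongPow_rpow_le_card (n : ℕ) :
    (indepNum (strongPow G (n + 1)) : ℝ) ^ (1 / ((n : ℝ) + 1)) ≤ Fintype.card V := by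
  have hpos : (0 : ℝ) < (n : ℝ) + 1 := by positivity
  have hcard :
      (indepNum (strongPow G (n + 1)) : ℝ) ≤ (Fintype.card V : ℝ) ^ ((n : ℝ) + 1) := by
    have := indepNum_le_card (strongPow G (n + 1))
    rw [Fintype.card_fun, Fintype.card_fin] at this
    exact_mod_cast this
  calc (indepNum (strongPow G (n + 1)) : ℝ) ^ (1 / ((n : ℝ) + 1))
      ≤ ((Fintype.card V : ℝ) ^ ((n : ℝ) + 1)) ^ (1 / ((n : ℝ) + 1)) := by gcongr
    _ = Fintype.card V := by
      rw [← Real.rpow_mul (Nat.cast_nonneg _), mul_one_div_cancel hpos.ne', Real.rpow_one]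

theorem le_shannonCapacity (n : ℕ) :
    (indepNum (strongPow G (n + 1)) : ℝ) ^ (1 / ((n : ℝ) + 1)) ≤ shannonCapacity G :=
  le_ciSup ⟨(Fintype.card V : ℝ), by
    rintro _ ⟨m, rfl⟩
    exact indepNum_strongPow_rpow_le_card G m⟩ n

end ShannonCapacity

theorem shannonCapacity_nonneg {V : Type*} (G : SimpleGraph V) : 0 ≤ shannonCapacity G :=
  Real.iSup_nonneg fun _ => Real.rpow_nonneg (Nat.cast_nonneg _) _

namespace KWQFA

variable {V : Type*} [Fintype V] {G : SimpleGraph V} {M : KWQFA V}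

theorem sum_acceptProb_le_indepNum (hM : Distinguishable G M.accepts) (n : ℕ) :
    ∑ w : Fin n → V, M.acceptProb (List.ofFn w) ≤ indepNum (strongPow G n) := by
  classical
  set S := Finset.univ.filter fun w : Fin n → V => List.ofFn w ∈ M.accepts
  have hS : (S.card : ℝ) ≤ indepNum (strongPow G n) := by
    rw [← Set.ncard_coe_finset, Finset.coe_filter_univ]
    exact_mod_cast ncard_le_indepNum (hM.pairwise_not_adj_strongPow n)
  calc ∑ w : Fin n → V, M.acceptProb (List.ofFn w)
      = ∑ w ∈ S, M.acceptProb (List.ofFn w) :=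
        (Finset.sum_filter_of_ne fun _ _ => M.mem_accepts_of_acceptProb_ne_zero).symm
    _ ≤ S.card • (1 : ℝ) := Finset.sum_le_card_nsmul _ _ _ fun _ _ => M.acceptProb_le_one _
    _ ≤ indepNum (strongPow G n) := by simpa using hS

theorem capacity_le_shannonCapacity (hM : Distinguishable G M.accepts) :
    M.capacity ≤ shannonCapacity G := by
  rw [capacity]
  refine limsup_le_of_le (isCoboundedUnder_le_of_le atTop fun n =>
    Real.rpow_nonneg (Finset.sum_nonneg fun _ _ => M.acceptProb_nonneg _) _) ?_
  filter_upwards [eventually_gt_atTop 0] with n hn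
  obtain ⟨m, rfl⟩ := Nat.exists_eq_add_one_of_ne_zero hn.ne'
  calc (∑ w : Fin (m + 1) → V, M.acceptProb (List.ofFn w)) ^ (1 / ((m + 1 : ℕ) : ℝ))
      ≤ (indepNum (strongPow G (m + 1)) : ℝ) ^ (1 / ((m + 1 : ℕ) : ℝ)) := by
        gcongr
        · exact Finset.sum_nonneg fun _ _ => M.acceptProb_nonneg _
        · exact sum_acceptProb_le_indepNum hM _
    _ ≤ shannonCapacity G := by exact_mod_cast le_shannonCapacity G m

end KWQFA

/-- the unitary capacity is at most the Shannon capacity. -/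
theorem unitaryCapacity_le_shannonCapacity {V : Type*} [Fintype V] (G : SimpleGraph V) :
    unitaryCapacity G ≤ shannonCapacity G := by
  refine Real.sSup_le ?_ (shannonCapacity_nonneg G)
  rintro r ⟨M, hM, rfl⟩
  exact M.capacity_le_shannonCapacity hM
end
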